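/- (Whipple transformation, terminating case) Let p, q, a₁, a₂, r, b₁, b₂ be integers with p ≥ 0 and q + a₁ + a₂ + 1 = r + b₁ + b₂ + p, and suppose all Pochhammer symbols appearing in denominators are nonzero over the range of summation. Then ₄F₃[−p, q, a₁, a₂; r, b₁, b₂; 1] = ((b₁−q)_p (b₂−q)_p)/((b₁)_p (b₂)_p) · ₄F₃[−p, q, r−a₁, r−a₂; r, 1+q−b₁−p, 1+q−b₂−p; 1]. -/
import Mathlib

/-- Pochhammer symbol `(a)_n`. -/
noncomputable def poch (a : ℝ) (n : ℕ) : ℝ := ∏ k ∈ Finset.range n, (a + k)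

/-- Terminating `₄F₃` sum with `N+1` terms. -/
noncomputable def F4gen (α₁ α₂ α₃ α₄ β₁ β₂ β₃ : ℝ) (N : ℕ) : ℝ :=
  ∑ n ∈ Finset.range (N + 1),
    (poch α₁ n * poch α₂ n * poch α₃ n * poch α₄ n) /
      (poch β₁ n * poch β₂ n * poch β₃ n * (n.factorial : ℝ))

lemma poch_zero (a : ℝ) : poch a 0 = 1 := by simp [poch]

lemma poch_succ (a : ℝ) (n : ℕ) : poch a (n+1) = poch a n * (a + n) :=
  Finset.prod_range_succ _ _

lemma poch_one (a : ℝ) : poch a 1 = a := by simp [poch]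

lemma poch_succ' (a : ℝ) (n : ℕ) : poch a (n+1) = a * poch (a+1) n := by
  rw [poch, Finset.prod_range_succ']
  simp only [Nat.cast_zero, add_zero]
  rw [mul_comm, poch]
  congr 1
  apply Finset.prod_congr rfl
  intro k _
  push_cast
  ring

lemma poch_add (a : ℝ) (m n : ℕ) : poch a (m+n) = poch a m * poch (a+m) n := by
  induction n with
  | zero => simp [poch_zero]
  | succ k ih =>
      have : m + (k+1) = (m+k) + 1 := by ring
      rw [this, poch_succ, ih, poch_succ]
      push_cast
      ring

lemma poch_reflect (y : ℝ) (m : ℕ) : poch (1 - y) m = (-1)^m * poch (y - m) m := by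
  induction m with
  | zero => simp [poch_zero]
  | succ k ih =>
      rw [poch_succ, ih, poch_succ']
      have h1 : y - ((k:ℝ)+1) + 1 = y - k := by ring
      push_cast
      rw [h1]
      ring

lemma poch_cast_factorial (k m : ℕ) :
    (k.factorial : ℝ) * poch ((k:ℝ)+1) m = ((k+m).factorial : ℝ) := by
  induction m with
  | zero => simp [poch_zero]
  | succ i ih =>
      rw [poch_succ, ← mul_assoc, ih]
      have : k + (i+1) = (k+i) + 1 := by ring
      rw [this, Nat.factorial_succ]
      push_cast
      ring

lemma poch_ne_zero_of_le {a : ℝ} {n : ℕ} (h : poch a n ≠ 0) {m : ℕ} (hm : m ≤ n) :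
    poch a m ≠ 0 := by
  obtain ⟨d, rfl⟩ := Nat.exists_eq_add_of_le hm
  rw [poch_add] at h
  exact left_ne_zero_of_mul h

lemma poch_shift_ne_zero {a : ℝ} {n : ℕ} (h : poch a n ≠ 0) {j m : ℕ} (hm : j + m ≤ n) :
    poch (a + j) m ≠ 0 := by
  have h' : poch a (j + m) ≠ 0 := poch_ne_zero_of_le h hm
  rw [poch_add] at h'
  exact right_ne_zero_of_mul h'

/-- Division-free Pfaff–Saalschütz / Euler transform coefficient identity. -/
lemma star (A B C : ℝ) (n : ℕ) : poch A n * poch B n =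
    ∑ j ∈ Finset.range (n+1), (n.choose j : ℝ) * poch (C-A) j * poch (C-B) j *
      poch (C+j) (n-j) * poch (A+B-C) (n-j) := by
  induction n with
  | zero => simp [poch_zero]
  | succ n ih =>
    set T : ℕ → ℕ → ℝ := fun N j => (N.choose j : ℝ) * poch (C-A) j * poch (C-B) j *
      poch (C+j) (N-j) * poch (A+B-C) (N-j) with hT
    set g : ℕ → ℝ := fun j => (n.choose j : ℝ) * poch (C-A) (j+1) * poch (C-B) (j+1) *
      poch (C+j) (n-j) * poch (A+B-C) (n-j) with hg
    have c0 : T (n+1) 0 = (A+n)*(B+n) * T n 0 - g 0 := by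
      simp only [hT, hg, Nat.choose_zero_right, Nat.cast_one, Nat.sub_zero, Nat.cast_zero,
        add_zero, poch_zero, one_mul, mul_one, zero_add, poch_one]
      rw [poch_succ, poch_succ]
      ring
    have c1 : ∀ j ≤ n, T (n+1) (j+1) - (A+n)*(B+n) * T n (j+1) = g j - g (j+1) := by
      intro j hj
      rcases eq_or_lt_of_le hj with rfl | hlt
      · -- j = n
        simp only [hT, hg, Nat.choose_self, Nat.choose_succ_self, Nat.cast_one, Nat.cast_zero,
          Nat.sub_self, Nat.succ_sub_succ, poch_zero]
        ring
      · obtain ⟨m, rfl⟩ : ∃ m, n = j + m + 1 := ⟨n - j - 1, by omega⟩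
        have e1 : j + m + 1 - j = m + 1 := by omega
        have e2 : j + m + 1 - (j+1) = m := by omega
        have e3 : j + m + 1 + 1 - (j+1) = m + 1 := by omega
        have hpas : (((j+m+1)+1).choose (j+1) : ℝ) =
            ((j+m+1).choose j : ℝ) + ((j+m+1).choose (j+1) : ℝ) := by
          rw [Nat.choose_succ_succ]; push_cast; ring
        have h1 : ((j+m+1).choose (j+1) : ℝ) * ((j:ℝ)+1) =
            ((j+m+1).choose j : ℝ) * ((m:ℝ)+1) := by
          have := Nat.choose_succ_right_eq (j+m+1) j
          have e4 : j + m + 1 - j = m + 1 := by omega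
          rw [e4] at this
          exact_mod_cast congrArg (Nat.cast : ℕ → ℝ) this
        simp only [hT, hg, e1, e2, e3]
        have r1 : poch (C+↑(j+1)) (m+1) = poch (C+↑j+1) m * (C+↑j+1+m) := by
          push_cast; rw [poch_succ]; ring_nf
        have r2 : poch (C+↑(j+1)) m = poch (C+↑j+1) m := by push_cast; ring_nf
        have r3 : poch (C+↑j) (m+1) = (C+↑j) * poch (C+↑j+1) m := by
          rw [poch_succ']
        have r4 : poch (A+B-C) (m+1) = poch (A+B-C) m * (A+B-C+m) := poch_succ _ _
        have r5 : poch (C-A) (j+1+1) = poch (C-A) (j+1) * (C-A+↑j+1) := by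
          rw [poch_succ]; push_cast; ring_nf
        have r6 : poch (C-B) (j+1+1) = poch (C-B) (j+1) * (C-B+↑j+1) := by
          rw [poch_succ]; push_cast; ring_nf
        rw [r1, r2, r3, r4, r5, r6]
        push_cast
        linear_combination (poch (C-A) (j+1) * poch (C-B) (j+1) * poch (C+↑j+1) m *
            poch (A+B-C) m * (C+↑j+↑m+1) * (A+B-C+↑m)) * hpas
          - (poch (C-A) (j+1) * poch (C-B) (j+1) * poch (C+↑j+1) m *
            poch (A+B-C) m * (A+B-C+↑m)) * h1
    -- combine
    have hsum1 : ∑ j ∈ Finset.range (n+2), T (n+1) j =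
        T (n+1) 0 + ∑ j ∈ Finset.range (n+1), T (n+1) (j+1) := by
      rw [Finset.sum_range_succ' (fun j => T (n+1) j) (n+1)]; ring
    have hsum2 : ∑ j ∈ Finset.range (n+1), T n (j+1) =
        (∑ j ∈ Finset.range (n+1), T n j) - T n 0 := by
      have h2 : ∑ j ∈ Finset.range (n+2), T n j =
          T n 0 + ∑ j ∈ Finset.range (n+1), T n (j+1) := by
        rw [Finset.sum_range_succ' (fun j => T n j) (n+1)]; ring
      have h3 : ∑ j ∈ Finset.range (n+2), T n j =
          (∑ j ∈ Finset.range (n+1), T n j) + T n (n+1) := Finset.sum_range_succ _ _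
      have h4 : T n (n+1) = 0 := by
        simp [hT, Nat.choose_succ_self]
      rw [h4] at h3
      linarith [h2, h3.symm]
    have htel : ∑ j ∈ Finset.range (n+1), (g j - g (j+1)) = g 0 - g (n+1) :=
      Finset.sum_range_sub' g (n+1)
    have hgend : g (n+1) = 0 := by simp [hg, Nat.choose_succ_self]
    have key : ∑ j ∈ Finset.range (n+1), T (n+1) (j+1) =
        (A+n)*(B+n) * (∑ j ∈ Finset.range (n+1), T n (j+1)) + (g 0 - g (n+1)) := by
      have hterm : ∀ j ∈ Finset.range (n+1), T (n+1) (j+1) =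
          (A+↑n)*(B+↑n) * T n (j+1) + (g j - g (j+1)) := by
        intro j hj
        have := c1 j (Nat.lt_succ_iff.mp (Finset.mem_range.mp hj))
        linarith
      rw [Finset.sum_congr rfl hterm, Finset.sum_add_distrib, ← Finset.mul_sum, htel]
    calc poch A (n+1) * poch B (n+1)
        = (poch A n * poch B n) * ((A+n)*(B+n)) := by rw [poch_succ, poch_succ]; ring
      _ = (∑ j ∈ Finset.range (n+1), T n j) * ((A+n)*(B+n)) := by rw [ih]
      _ = ∑ j ∈ Finset.range (n+2), T (n+1) j := by
          rw [hsum1, key, hsum2, hgend, c0]; ring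

lemma poch_neg_nat (M m : ℕ) (h : m ≤ M) :
    poch (-(M:ℝ)) m = (-1)^m * poch (((M-m : ℕ) : ℝ)+1) m := by
  have hr := poch_reflect ((M:ℝ)+1) m
  have e : 1 - ((M:ℝ)+1) = -(M:ℝ) := by ring
  have e2 : ((M:ℝ)+1) - m = ((M-m : ℕ):ℝ) + 1 := by
    have : ((M-m:ℕ):ℝ) = (M:ℝ) - m := by
      push_cast [h]; ring
    rw [this]; ring
  rw [e, e2] at hr
  exact hr

lemma fact_ne_zero_R (m : ℕ) : (m.factorial : ℝ) ≠ 0 :=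
  Nat.cast_ne_zero.mpr m.factorial_ne_zero

/-- Pfaff–Saalschütz summation, division form. -/
lemma saal (X Y U V : ℝ) (M : ℕ) (hb : U + V = 1 + X + Y - (M:ℝ))
    (hU : poch U M ≠ 0) (hV : poch V M ≠ 0) :
    (∑ m ∈ Finset.range (M+1), poch (-(M:ℝ)) m * poch X m * poch Y m /
        (poch U m * poch V m * (m.factorial : ℝ)))
      = (-1)^M * (poch (U-X) M * poch (U-Y) M) / (poch U M * poch V M) := by
  have hstar := star (U-X) (U-Y) U M
  rw [sub_sub_cancel, sub_sub_cancel, show U-X+(U-Y)-U = U-X-Y from by ring] at hstar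
  have hterm : ∀ m ∈ Finset.range (M+1),
      poch (-(M:ℝ)) m * poch X m * poch Y m / (poch U m * poch V m * (m.factorial : ℝ))
        = ((M.choose m : ℝ) * poch X m * poch Y m * poch (U+m) (M-m) * poch (U-X-Y) (M-m))
          * ((-1)^M / (poch U M * poch V M)) := by
    intro m hm
    have hmM : m ≤ M := Nat.lt_succ_iff.mp (Finset.mem_range.mp hm)
    obtain ⟨d, rfl⟩ := Nat.exists_eq_add_of_le hmM
    simp only [Nat.add_sub_cancel_left]
    have hUm : poch U (m+d) = poch U m * poch (U+m) d := poch_add U m d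
    have hVm : poch V (m+d) = poch V m * poch (V+m) d := poch_add V m d
    have hneg : poch (-((m+d:ℕ):ℝ)) m = (-1)^m * poch ((d:ℝ)+1) m := by
      have h := poch_neg_nat (m+d) m (Nat.le_add_right m d)
      rwa [show m+d-m = d from by omega] at h
    have hrefl : poch (U-X-Y) d = (-1)^d * poch (V+m) d := by
      have h := poch_reflect (V + ((m+d:ℕ):ℝ)) d
      have e : 1 - (V + ((m+d:ℕ):ℝ)) = U-X-Y := by push_cast; push_cast at hb; linarith
      have e2 : V + ((m+d:ℕ):ℝ) - d = V + m := by push_cast; ring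
      rw [e, e2] at h
      exact h
    have hkey : (((m+d).choose m : ℝ)) * (m.factorial : ℝ) = poch ((d:ℝ)+1) m := by
      have h1 := poch_cast_factorial d m
      have h2 : ((m+d).choose m) * m.factorial * d.factorial = (m+d).factorial := by
        have h := Nat.choose_mul_factorial_mul_factorial (Nat.le_add_right m d)
        rwa [show m+d-m = d from by omega] at h
      have h2' : (((m+d).choose m : ℝ)) * (m.factorial:ℝ) * (d.factorial:ℝ)
          = ((m+d).factorial : ℝ) := by exact_mod_cast congrArg (Nat.cast : ℕ → ℝ) h2
      have hd : (d.factorial:ℝ) ≠ 0 := fact_ne_zero_R d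
      apply mul_left_cancel₀ hd
      rw [h1]
      rw [show d + m = m + d from by omega] at *
      linarith [h2']
    have hUmne : poch U m ≠ 0 := poch_ne_zero_of_le hU (Nat.le_add_right m d)
    have hVmne : poch V m ≠ 0 := poch_ne_zero_of_le hV (Nat.le_add_right m d)
    have hPU : poch (U+m) d ≠ 0 := by
      rw [hUm] at hU; exact right_ne_zero_of_mul hU
    have hPV : poch (V+m) d ≠ 0 := by
      rw [hVm] at hV; exact right_ne_zero_of_mul hV
    rw [hneg, hrefl, hUm, hVm, ← hkey]
    have hfm := fact_ne_zero_R m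
    field_simp
    ring_nf
    rw [mul_comm d 2, pow_mul]
    norm_num
  rw [Finset.sum_congr rfl hterm, ← Finset.sum_mul, ← hstar]
  ring

lemma key1 (p n j : ℕ) (hj : j ≤ n) (hn : n ≤ p) (Q A1 A2 R B1 B2 : ℝ)
    (hR : poch R n ≠ 0) (hB1 : poch B1 n ≠ 0) (hB2 : poch B2 n ≠ 0) :
    ((n.choose j : ℝ) * poch (R-A1) j * poch (R-A2) j * poch (R+↑j) (n-j) *
        poch (A1+A2-R) (n-j)) * (poch (-(p:ℝ)) n * poch Q n) /
      (poch R n * poch B1 n * poch B2 n * (n.factorial:ℝ))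
    = (poch (-(p:ℝ)) j * poch Q j * poch (R-A1) j * poch (R-A2) j /
        (poch R j * poch B1 j * poch B2 j * (j.factorial:ℝ))) *
      (poch (-((p-j : ℕ):ℝ)) (n-j) * poch (Q+↑j) (n-j) * poch (A1+A2-R) (n-j) /
        (poch (B1+↑j) (n-j) * poch (B2+↑j) (n-j) * ((n-j).factorial:ℝ))) := by
  have hjp : j ≤ p := le_trans hj hn
  obtain ⟨d, rfl⟩ := Nat.exists_eq_add_of_le hj
  simp only [Nat.add_sub_cancel_left]
  have harg : (-(p:ℝ)) + ↑j = -((p-j:ℕ):ℝ) := by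
    rw [Nat.cast_sub hjp]; ring
  have hPd : poch (-(p:ℝ)) (j+d) = poch (-(p:ℝ)) j * poch (-((p-j:ℕ):ℝ)) d := by
    rw [poch_add, harg]
  have hQd : poch Q (j+d) = poch Q j * poch (Q+↑j) d := poch_add Q j d
  have hRd : poch R (j+d) = poch R j * poch (R+↑j) d := poch_add R j d
  have hB1d : poch B1 (j+d) = poch B1 j * poch (B1+↑j) d := poch_add B1 j d
  have hB2d : poch B2 (j+d) = poch B2 j * poch (B2+↑j) d := poch_add B2 j d
  have hRj : poch R j ≠ 0 := poch_ne_zero_of_le hR (Nat.le_add_right j d)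
  have hRjd : poch (R+↑j) d ≠ 0 := by rw [hRd] at hR; exact right_ne_zero_of_mul hR
  have hB1j : poch B1 j ≠ 0 := poch_ne_zero_of_le hB1 (Nat.le_add_right j d)
  have hB1jd : poch (B1+↑j) d ≠ 0 := by rw [hB1d] at hB1; exact right_ne_zero_of_mul hB1
  have hB2j : poch B2 j ≠ 0 := poch_ne_zero_of_le hB2 (Nat.le_add_right j d)
  have hB2jd : poch (B2+↑j) d ≠ 0 := by rw [hB2d] at hB2; exact right_ne_zero_of_mul hB2
  have hfac : ((j+d).factorial : ℝ) = ((j+d).choose j : ℝ) * (j.factorial:ℝ) * (d.factorial:ℝ) := by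
    have h := Nat.choose_mul_factorial_mul_factorial (Nat.le_add_right j d)
    rw [show j+d-j = d from by omega] at h
    exact_mod_cast (congrArg (Nat.cast : ℕ → ℝ) h).symm
  have hch : ((j+d).choose j : ℝ) ≠ 0 :=
    Nat.cast_ne_zero.mpr (Nat.choose_pos (Nat.le_add_right j d)).ne'
  rw [hPd, hQd, hRd, hB1d, hB2d, hfac]
  have hfj := fact_ne_zero_R j
  have hfd := fact_ne_zero_R d
  field_simp

lemma key2 (p j : ℕ) (hj : j ≤ p) (Q R A1 A2 B1 B2 : ℝ)
    (hRj : poch R j ≠ 0) (hB1p : poch B1 p ≠ 0) (hB2p : poch B2 p ≠ 0)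
    (hq1 : poch (1+Q-B1-(p:ℝ)) j ≠ 0) (hq2 : poch (1+Q-B2-(p:ℝ)) j ≠ 0) :
    (poch (-(p:ℝ)) j * poch Q j * poch (R-A1) j * poch (R-A2) j /
        (poch R j * poch B1 j * poch B2 j * (j.factorial:ℝ))) *
      ((-1)^(p-j) * (poch (B1-Q) (p-j) * poch (1+Q-B2-(p:ℝ)+↑j) (p-j)) /
        (poch (B1+↑j) (p-j) * poch (B2+↑j) (p-j)))
    = (poch (B1-Q) p * poch (B2-Q) p / (poch B1 p * poch B2 p)) *
      (poch (-(p:ℝ)) j * poch Q j * poch (R-A1) j * poch (R-A2) j /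
        (poch R j * poch (1+Q-B1-(p:ℝ)) j * poch (1+Q-B2-(p:ℝ)) j * (j.factorial:ℝ))) := by
  obtain ⟨c, rfl⟩ := Nat.exists_eq_add_of_le hj
  simp only [Nat.add_sub_cancel_left]
  have hB1s : poch B1 (j+c) = poch B1 j * poch (B1+↑j) c := poch_add B1 j c
  have hB2s : poch B2 (j+c) = poch B2 j * poch (B2+↑j) c := poch_add B2 j c
  have hBq1 : poch (B1-Q) (j+c) = poch (B1-Q) c * poch (B1-Q+↑c) j := by
    rw [show j+c = c+j from by omega, poch_add]
  have hBq2 : poch (B2-Q) (j+c) = poch (B2-Q) c * poch (B2-Q+↑c) j := by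
    rw [show j+c = c+j from by omega, poch_add]
  have hr1 : poch (1+Q-B1-((j+c:ℕ):ℝ)) j = (-1)^j * poch (B1-Q+↑c) j := by
    have h := poch_reflect (B1-Q+((j+c:ℕ):ℝ)) j
    rw [show (1:ℝ)-(B1-Q+((j+c:ℕ):ℝ)) = 1+Q-B1-((j+c:ℕ):ℝ) from by ring,
        show B1-Q+((j+c:ℕ):ℝ)-↑j = B1-Q+↑c from by push_cast; ring] at h
    exact h
  have hr2 : poch (1+Q-B2-((j+c:ℕ):ℝ)) j = (-1)^j * poch (B2-Q+↑c) j := by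
    have h := poch_reflect (B2-Q+((j+c:ℕ):ℝ)) j
    rw [show (1:ℝ)-(B2-Q+((j+c:ℕ):ℝ)) = 1+Q-B2-((j+c:ℕ):ℝ) from by ring,
        show B2-Q+((j+c:ℕ):ℝ)-↑j = B2-Q+↑c from by push_cast; ring] at h
    exact h
  have hrefl2 : poch (1+Q-B2-((j+c:ℕ):ℝ)+↑j) c = (-1)^c * poch (B2-Q) c := by
    have h := poch_reflect (B2-Q+↑c) c
    rw [show (1:ℝ)-(B2-Q+↑c) = 1+Q-B2-((j+c:ℕ):ℝ)+↑j from by push_cast; ring,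
        show B2-Q+↑c-↑c = B2-Q from by ring] at h
    exact h
  have hB1j : poch B1 j ≠ 0 := poch_ne_zero_of_le hB1p (Nat.le_add_right j c)
  have hB1jc : poch (B1+↑j) c ≠ 0 := by
    rw [hB1s] at hB1p; exact right_ne_zero_of_mul hB1p
  have hB2j : poch B2 j ≠ 0 := poch_ne_zero_of_le hB2p (Nat.le_add_right j c)
  have hB2jc : poch (B2+↑j) c ≠ 0 := by
    rw [hB2s] at hB2p; exact right_ne_zero_of_mul hB2p
  have hx1 : poch (B1-Q+↑c) j ≠ 0 := by
    rw [hr1] at hq1; exact right_ne_zero_of_mul hq1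
  have hx2 : poch (B2-Q+↑c) j ≠ 0 := by
    rw [hr2] at hq2; exact right_ne_zero_of_mul hq2
  have hfj := fact_ne_zero_R j
  rw [hrefl2, hBq1, hBq2, hB1s, hB2s, hr1, hr2]
  field_simp
  ring_nf
  rw [mul_comm c 2, mul_comm j 2, pow_mul, pow_mul]
  norm_num

theorem whipple (p : ℕ) (q a₁ a₂ r b₁ b₂ : ℤ)
    (hbal : q + a₁ + a₂ + 1 = r + b₁ + b₂ + p)
    (hden : ∀ n ≤ p, poch (r : ℝ) n ≠ 0 ∧ poch (b₁ : ℝ) n ≠ 0 ∧ poch (b₂ : ℝ) n ≠ 0 ∧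
      poch (1 + (q : ℝ) - b₁ - p) n ≠ 0 ∧ poch (1 + (q : ℝ) - b₂ - p) n ≠ 0) :
    F4gen (-(p : ℝ)) (q : ℝ) (a₁ : ℝ) (a₂ : ℝ) (r : ℝ) (b₁ : ℝ) (b₂ : ℝ) p
      = (poch ((b₁ : ℝ) - q) p * poch ((b₂ : ℝ) - q) p) / (poch (b₁ : ℝ) p * poch (b₂ : ℝ) p) *
        F4gen (-(p : ℝ)) (q : ℝ) ((r : ℝ) - a₁) ((r : ℝ) - a₂)
          (r : ℝ) (1 + (q : ℝ) - b₁ - p) (1 + (q : ℝ) - b₂ - p) p := by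
  have hbalR : (q:ℝ) + ↑a₁ + ↑a₂ + 1 = ↑r + ↑b₁ + ↑b₂ + (p:ℝ) := by exact_mod_cast hbal
  have hB1p : poch (b₁:ℝ) p ≠ 0 := (hden p le_rfl).2.1
  have hB2p : poch (b₂:ℝ) p ≠ 0 := (hden p le_rfl).2.2.1
  unfold F4gen
  calc
    (∑ n ∈ Finset.range (p+1),
        (poch (-(p:ℝ)) n * poch (q:ℝ) n * poch (a₁:ℝ) n * poch (a₂:ℝ) n) /
          (poch (r:ℝ) n * poch (b₁:ℝ) n * poch (b₂:ℝ) n * (n.factorial:ℝ)))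
      = ∑ n ∈ Finset.range (p+1), ∑ j ∈ Finset.range (n+1),
          (poch (-(p:ℝ)) j * poch (q:ℝ) j * poch ((r:ℝ)-↑a₁) j * poch ((r:ℝ)-↑a₂) j /
            (poch (r:ℝ) j * poch (b₁:ℝ) j * poch (b₂:ℝ) j * (j.factorial:ℝ))) *
          (poch (-((p-j : ℕ):ℝ)) (n-j) * poch ((q:ℝ)+↑j) (n-j) * poch ((a₁:ℝ)+↑a₂-↑r) (n-j) /
            (poch ((b₁:ℝ)+↑j) (n-j) * poch ((b₂:ℝ)+↑j) (n-j) * ((n-j).factorial:ℝ))) := by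
        apply Finset.sum_congr rfl
        intro n hn
        have hnp : n ≤ p := Nat.lt_succ_iff.mp (Finset.mem_range.mp hn)
        have e0 : (poch (-(p:ℝ)) n * poch (q:ℝ) n * poch (a₁:ℝ) n * poch (a₂:ℝ) n) /
            (poch (r:ℝ) n * poch (b₁:ℝ) n * poch (b₂:ℝ) n * (n.factorial:ℝ))
          = (poch (a₁:ℝ) n * poch (a₂:ℝ) n) * (poch (-(p:ℝ)) n * poch (q:ℝ) n) /
            (poch (r:ℝ) n * poch (b₁:ℝ) n * poch (b₂:ℝ) n * (n.factorial:ℝ)) := by ring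
        rw [e0, star (a₁:ℝ) (a₂:ℝ) (r:ℝ) n, Finset.sum_mul, Finset.sum_div]
        exact Finset.sum_congr rfl (fun j hj =>
          key1 p n j (Nat.lt_succ_iff.mp (Finset.mem_range.mp hj)) hnp
            (q:ℝ) (a₁:ℝ) (a₂:ℝ) (r:ℝ) (b₁:ℝ) (b₂:ℝ)
            (hden n hnp).1 (hden n hnp).2.1 (hden n hnp).2.2.1)
    _ = ∑ j ∈ Finset.range (p+1), ∑ n ∈ Finset.Ico j (p+1),
          (poch (-(p:ℝ)) j * poch (q:ℝ) j * poch ((r:ℝ)-↑a₁) j * poch ((r:ℝ)-↑a₂) j /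
            (poch (r:ℝ) j * poch (b₁:ℝ) j * poch (b₂:ℝ) j * (j.factorial:ℝ))) *
          (poch (-((p-j : ℕ):ℝ)) (n-j) * poch ((q:ℝ)+↑j) (n-j) * poch ((a₁:ℝ)+↑a₂-↑r) (n-j) /
            (poch ((b₁:ℝ)+↑j) (n-j) * poch ((b₂:ℝ)+↑j) (n-j) * ((n-j).factorial:ℝ))) := by
        simp only [Finset.range_eq_Ico]
        exact (Finset.sum_Ico_Ico_comm 0 (p+1) (fun i k =>
          (poch (-(p:ℝ)) i * poch (q:ℝ) i * poch ((r:ℝ)-↑a₁) i * poch ((r:ℝ)-↑a₂) i /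
            (poch (r:ℝ) i * poch (b₁:ℝ) i * poch (b₂:ℝ) i * (i.factorial:ℝ))) *
          (poch (-((p-i : ℕ):ℝ)) (k-i) * poch ((q:ℝ)+↑i) (k-i) * poch ((a₁:ℝ)+↑a₂-↑r) (k-i) /
            (poch ((b₁:ℝ)+↑i) (k-i) * poch ((b₂:ℝ)+↑i) (k-i) * ((k-i).factorial:ℝ))))).symm
    _ = ∑ j ∈ Finset.range (p+1),
          (poch (-(p:ℝ)) j * poch (q:ℝ) j * poch ((r:ℝ)-↑a₁) j * poch ((r:ℝ)-↑a₂) j /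
            (poch (r:ℝ) j * poch (b₁:ℝ) j * poch (b₂:ℝ) j * (j.factorial:ℝ))) *
          ∑ m ∈ Finset.range ((p-j)+1),
            (poch (-((p-j : ℕ):ℝ)) m * poch ((q:ℝ)+↑j) m * poch ((a₁:ℝ)+↑a₂-↑r) m /
              (poch ((b₁:ℝ)+↑j) m * poch ((b₂:ℝ)+↑j) m * (m.factorial:ℝ))) := by
        apply Finset.sum_congr rfl
        intro j hj
        have hjp : j ≤ p := Nat.lt_succ_iff.mp (Finset.mem_range.mp hj)
        rw [Finset.sum_Ico_eq_sum_range, show p+1-j = (p-j)+1 from by omega]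
        simp only [Nat.add_sub_cancel_left]
        rw [← Finset.mul_sum]
    _ = ∑ j ∈ Finset.range (p+1),
          (poch ((b₁:ℝ)-↑q) p * poch ((b₂:ℝ)-↑q) p / (poch (b₁:ℝ) p * poch (b₂:ℝ) p)) *
          (poch (-(p:ℝ)) j * poch (q:ℝ) j * poch ((r:ℝ)-↑a₁) j * poch ((r:ℝ)-↑a₂) j /
            (poch (r:ℝ) j * poch (1+(q:ℝ)-↑b₁-↑p) j * poch (1+(q:ℝ)-↑b₂-↑p) j *
              (j.factorial:ℝ))) := by
        apply Finset.sum_congr rfl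
        intro j hj
        have hjp : j ≤ p := Nat.lt_succ_iff.mp (Finset.mem_range.mp hj)
        have hb : ((b₁:ℝ)+↑j) + ((b₂:ℝ)+↑j) = 1 + ((q:ℝ)+↑j) + ((a₁:ℝ)+↑a₂-↑r) - ((p-j:ℕ):ℝ) := by
          rw [Nat.cast_sub hjp]; linarith [hbalR]
        have hU : poch ((b₁:ℝ)+↑j) (p-j) ≠ 0 :=
          poch_shift_ne_zero hB1p (by omega)
        have hV : poch ((b₂:ℝ)+↑j) (p-j) ≠ 0 :=
          poch_shift_ne_zero hB2p (by omega)
        have hsaal := saal ((q:ℝ)+↑j) ((a₁:ℝ)+↑a₂-↑r) ((b₁:ℝ)+↑j) ((b₂:ℝ)+↑j) (p-j) hb hU hV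
        rw [show ((b₁:ℝ)+↑j)-((q:ℝ)+↑j) = (b₁:ℝ)-↑q from by ring,
            show ((b₁:ℝ)+↑j)-((a₁:ℝ)+↑a₂-↑r) = 1+(q:ℝ)-↑b₂-(p:ℝ)+↑j from by linarith [hbalR]]
          at hsaal
        rw [hsaal]
        exact key2 p j hjp (q:ℝ) (r:ℝ) (a₁:ℝ) (a₂:ℝ) (b₁:ℝ) (b₂:ℝ)
          (hden j hjp).1 hB1p hB2p (hden j hjp).2.2.2.1 (hden j hjp).2.2.2.2
    _ = (poch ((b₁:ℝ)-↑q) p * poch ((b₂:ℝ)-↑q) p) / (poch (b₁:ℝ) p * poch (b₂:ℝ) p) *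
        ∑ j ∈ Finset.range (p+1),
          (poch (-(p:ℝ)) j * poch (q:ℝ) j * poch ((r:ℝ)-↑a₁) j * poch ((r:ℝ)-↑a₂) j /
            (poch (r:ℝ) j * poch (1+(q:ℝ)-↑b₁-↑p) j * poch (1+(q:ℝ)-↑b₂-↑p) j *
              (j.factorial:ℝ))) := by
        rw [← Finset.mul_sum]
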